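/- arXiv:1711.04650 — 6 statements merged into one kernel-verified Lean document; each statement's English description precedes it below -/
import Mathlib

section
/- If f is strongly convex on Y × X with constant α, X ⊆ dom(Q) with X, Y nonempty convex and Y closed, f and g lower semicontinuous, each component g_i of g convex, and the infimum defining Q is attained for each x ∈ X, then the value function Q(x) = inf { f(y,x) : y ∈ Y, A y + B x = b, g(y,x) ≤ 0 } is strongly convex on X with the same constant α. -/
open Set

def StrongConvexOnSet {E : Type*} [NormedAddCommGroup E] [NormedSpace ℝ E]
    (s : Set E) (a : ℝ) (f : E → ℝ) : Prop :=
  ∀ x ∈ s, ∀ y ∈ s, ∀ t : ℝ, 0 ≤ t → t ≤ 1 →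
    f (t • x + (1 - t) • y) ≤ t * f x + (1 - t) * f y - a / 2 * (t * (1 - t)) * ‖y - x‖ ^ 2

/-- Proposition 2.2: strong convexity of the value function
`Q(x) = inf { f(y,x) : y ∈ Y, A y + B x = b, g(y,x) ≤ 0 }`. -/
theorem value_function_strongly_convex {m n p q : ℕ}
    (X : Set (EuclideanSpace ℝ (Fin m))) (Y : Set (EuclideanSpace ℝ (Fin n)))
    (hXne : X.Nonempty) (hYne : Y.Nonempty) (hX : Convex ℝ X) (hY : Convex ℝ Y)
    (hYclosed : IsClosed Y)
    (A : EuclideanSpace ℝ (Fin n) →ₗ[ℝ] EuclideanSpace ℝ (Fin p))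
    (B : EuclideanSpace ℝ (Fin m) →ₗ[ℝ] EuclideanSpace ℝ (Fin p))
    (b : EuclideanSpace ℝ (Fin p))
    (f : EuclideanSpace ℝ (Fin n) × EuclideanSpace ℝ (Fin m) → ℝ)
    (g : EuclideanSpace ℝ (Fin n) × EuclideanSpace ℝ (Fin m) → Fin q → ℝ)
    (hf_lsc : LowerSemicontinuousOn f (Y ×ˢ X))
    (hg_lsc : ∀ i, LowerSemicontinuousOn (fun z => g z i) (Y ×ˢ X))
    (hg_cvx : ∀ i, ConvexOn ℝ (Y ×ˢ X) (fun z => g z i))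
    (a : ℝ) (ha : 0 < a)
    (hf_sc : StrongConvexOnSet (Y ×ˢ X) a f)
    (Q : EuclideanSpace ℝ (Fin m) → ℝ)
    (hQ : ∀ x ∈ X, IsLeast
      ((fun y => f (y, x)) '' {y ∈ Y | A y + B x = b ∧ ∀ i, g (y, x) i ≤ 0}) (Q x)) :
    StrongConvexOnSet X a Q := by
  intro x1 hx1 x2 hx2 t ht0 ht1
  obtain ⟨⟨y1, ⟨hy1Y, hy1A, hy1g⟩, hQ1⟩, _⟩ := hQ x1 hx1
  obtain ⟨⟨y2, ⟨hy2Y, hy2A, hy2g⟩, hQ2⟩, _⟩ := hQ x2 hx2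
  have ht1' : 0 ≤ 1 - t := by linarith
  have hxc : t • x1 + (1 - t) • x2 ∈ X := hX hx1 hx2 ht0 ht1' (by ring)
  have hyc : t • y1 + (1 - t) • y2 ∈ Y := hY hy1Y hy2Y ht0 ht1' (by ring)
  obtain ⟨_, hlb⟩ := hQ _ hxc
  -- feasibility of the combined point
  have hA : A (t • y1 + (1 - t) • y2) + B (t • x1 + (1 - t) • x2) = b := by
    simp only [map_add, map_smul]
    have : t • (A y1 + B x1) + (1 - t) • (A y2 + B x2) = t • b + (1 - t) • b := by
      rw [hy1A, hy2A]
    rw [smul_add, smul_add] at this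
    rw [show t • A y1 + (1 - t) • A y2 + (t • B x1 + (1 - t) • B x2)
        = t • A y1 + t • B x1 + ((1 - t) • A y2 + (1 - t) • B x2) by abel, this]
    rw [← add_smul]; norm_num
  have hgc : ∀ i, g (t • y1 + (1 - t) • y2, t • x1 + (1 - t) • x2) i ≤ 0 := by
    intro i
    have := (hg_cvx i).2 (Set.mk_mem_prod hy1Y hx1) (Set.mk_mem_prod hy2Y hx2)
      ht0 ht1' (by ring)
    simp only [Prod.smul_mk, Prod.mk_add_mk] at this
    calc g (t • y1 + (1 - t) • y2, t • x1 + (1 - t) • x2) i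
        ≤ t * g (y1, x1) i + (1 - t) * g (y2, x2) i := this
      _ ≤ 0 := by
          have h1 := hy1g i
          have h2 := hy2g i
          nlinarith
  have hmem : f (t • y1 + (1 - t) • y2, t • x1 + (1 - t) • x2) ∈
      ((fun y => f (y, t • x1 + (1 - t) • x2)) ''
        {y ∈ Y | A y + B (t • x1 + (1 - t) • x2) = b ∧
          ∀ i, g (y, t • x1 + (1 - t) • x2) i ≤ 0}) :=
    ⟨_, ⟨hyc, hA, hgc⟩, rfl⟩
  have hQle := hlb hmem
  have hsc := hf_sc (y1, x1) (Set.mk_mem_prod hy1Y hx1) (y2, x2)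
    (Set.mk_mem_prod hy2Y hx2) t ht0 ht1
  simp only [Prod.smul_mk, Prod.mk_add_mk] at hsc
  have hnorm : ‖x2 - x1‖ ≤ ‖((y2, x2) : _ × _) - (y1, x1)‖ := by
    have := norm_snd_le (((y2, x2) : _ × _) - (y1, x1))
    simpa using this
  have hsq : ‖x2 - x1‖ ^ 2 ≤ ‖((y2, x2) : _ × _) - (y1, x1)‖ ^ 2 :=
    pow_le_pow_left₀ (norm_nonneg _) hnorm 2
  have hcoef : 0 ≤ a / 2 * (t * (1 - t)) := by positivity
  calc Q (t • x1 + (1 - t) • x2)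
      ≤ f (t • y1 + (1 - t) • y2, t • x1 + (1 - t) • x2) := hQle
    _ ≤ t * f (y1, x1) + (1 - t) * f (y2, x2)
        - a / 2 * (t * (1 - t)) * ‖((y2, x2) : _ × _) - (y1, x1)‖ ^ 2 := hsc
    _ ≤ t * Q x1 + (1 - t) * Q x2 - a / 2 * (t * (1 - t)) * ‖x2 - x1‖ ^ 2 := by
        rw [show f (y1, x1) = Q x1 from hQ1, show f (y2, x2) = Q x2 from hQ2]
        have := mul_le_mul_of_nonneg_left hsq hcoef
        linarith
end

section
/- If f : ℝ^n × ℝ^m → ℝ is jointly convex and the matrix (A B) formed by concatenating the columns of the p×n matrix A and the p×m matrix B has linearly independent columns (i.e., the map (x,y) ↦ A x + B y is injective), then for every ρ > 0 the function (x,y) ↦ f(x,y) + ρ ‖A x + B y - b‖₂² is strongly convex on ℝ^n × ℝ^m with constant 2ρ σ, where σ > 0 is the smallest eigenvalue of the Gram matrix (A B)ᵀ(A B). -/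
open Matrix

open Set

open scoped RealInnerProductSpace

section StrongConvexity

variable {E F : Type*} [NormedAddCommGroup E] [NormedSpace ℝ E]

theorem StrongConvexOn.strongConvexOnSet {s : Set E} {a : ℝ} {f : E → ℝ}
    (hf : StrongConvexOn s a f) : StrongConvexOnSet s a f := by
  intro x hx y hy t ht0 ht1
  have h := hf.2 hx hy ht0 (sub_nonneg.2 ht1) (add_sub_cancel t 1)
  rw [smul_eq_mul, smul_eq_mul, norm_sub_rev] at h
  linarith

theorem ConvexOn.add_strongConvexOn {s : Set E} {m : ℝ} {f g : E → ℝ}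
    (hf : ConvexOn ℝ s f) (hg : StrongConvexOn s m g) : StrongConvexOn s m (f + g) :=
  ((uniformConvexOn_zero.2 hf).add hg).mono (zero_add _).ge

variable [NormedAddCommGroup F] [InnerProductSpace ℝ F]

theorem strongConvexOn_univ_const_mul_sq_norm (ρ : ℝ) :
    StrongConvexOn univ (2 * ρ) fun v : F => ρ * ‖v‖ ^ 2 :=
  strongConvexOn_iff_convex.2 <| by simpa using convexOn_const (0 : ℝ) convex_univ

theorem StrongConvexOn.comp_linearMap_sub {m σ : ℝ} {g : F → ℝ}
    (hg : StrongConvexOn univ m g) (hm : 0 ≤ m) (L : E →ₗ[ℝ] F) (c : F)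
    (hL : ∀ u, σ * ‖u‖ ^ 2 ≤ ‖L u‖ ^ 2) :
    StrongConvexOn univ (m * σ) fun z => g (L z - c) := by
  refine ⟨convex_univ, fun x _ y _ a b ha hb hab => ?_⟩
  obtain rfl : b = 1 - a := by linarith
  have hcomb : L (a • x + (1 - a) • y) - c = a • (L x - c) + (1 - a) • (L y - c) := by
    rw [map_add, map_smul, map_smul]; module
  have hdiff : (L x - c) - (L y - c) = L (x - y) := by rw [map_sub]; abel
  have hmod : m * σ / 2 * ‖x - y‖ ^ 2 ≤ m / 2 * ‖L (x - y)‖ ^ 2 := by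
    have := mul_le_mul_of_nonneg_left (hL (x - y)) (by positivity : 0 ≤ m / 2)
    linarith
  have h := hg.2 (mem_univ (L x - c)) (mem_univ (L y - c)) ha hb hab
  dsimp only at h ⊢
  rw [hdiff, smul_eq_mul, smul_eq_mul] at h
  rw [hcomb, smul_eq_mul, smul_eq_mul]
  linarith [mul_le_mul_of_nonneg_left hmod (mul_nonneg ha hb)]

end StrongConvexity

section Gram

variable {k l : Type*} [Fintype k] [Fintype l] [DecidableEq k]

theorem Matrix.IsHermitian.mul_sq_norm_le_inner_toEuclideanLin {G : Matrix k k ℝ}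
    (hG : G.IsHermitian) {σ : ℝ} (hσ : ∀ i, σ ≤ hG.eigenvalues i) (w : EuclideanSpace ℝ k) :
    σ * ‖w‖ ^ 2 ≤ ⟪w, toEuclideanLin G w⟫ := by
  set e := hG.eigenvectorBasis
  have hsymm : (toEuclideanLin G).IsSymmetric := isSymmetric_toEuclideanLin_iff.mpr hG
  have happ (j : k) : toEuclideanLin G (e j) = hG.eigenvalues j • e j := by
    apply (WithLp.equiv 2 _).injective
    simpa [toLpLin_apply] using hG.mulVec_eigenvectorBasis j
  have hquad : ⟪w, toEuclideanLin G w⟫ = ∑ i, hG.eigenvalues i * (⟪e i, w⟫ * ⟪e i, w⟫) := by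
    rw [← e.sum_inner_mul_inner w (toEuclideanLin G w)]
    refine Finset.sum_congr rfl fun i _ => ?_
    rw [← hsymm (e i) w, happ i, real_inner_smul_left, real_inner_comm w (e i)]
    ring
  have hnorm : ‖w‖ ^ 2 = ∑ i, ⟪e i, w⟫ * ⟪e i, w⟫ := by
    rw [← real_inner_self_eq_norm_sq, ← e.sum_inner_mul_inner w w]
    simp only [real_inner_comm w]
  rw [hquad, hnorm, Finset.mul_sum]
  exact Finset.sum_le_sum fun i _ => mul_le_mul_of_nonneg_right (hσ i) (mul_self_nonneg _)

theorem Matrix.inner_toEuclideanLin_transpose_mul_self [DecidableEq l] (M : Matrix l k ℝ)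
    (w : EuclideanSpace ℝ k) : ⟪w, toEuclideanLin (Mᵀ * M) w⟫ = ‖toEuclideanLin M w‖ ^ 2 := by
  have hcomp : toEuclideanLin (Mᵀ * M) w = toEuclideanLin Mᴴ (toEuclideanLin M w) := by
    apply (WithLp.equiv 2 _).injective
    simp [toLpLin_apply, mulVec_mulVec]
  rw [hcomp, toEuclideanLin_conjTranspose_eq_adjoint, LinearMap.adjoint_inner_right,
    real_inner_self_eq_norm_sq]

end Gram

theorem penalized_strongly_convex_general {n m p : ℕ}
    (b : EuclideanSpace ℝ (Fin p))
    (f : EuclideanSpace ℝ (Fin n ⊕ Fin m) → ℝ)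
    (hf : ConvexOn ℝ Set.univ f)
    (M : Matrix (Fin p) (Fin n ⊕ Fin m) ℝ)
    (hG : (Mᵀ * M).IsHermitian)
    (σ : ℝ) (hσ : IsLeast (Set.range hG.eigenvalues) σ)
    (ρ : ℝ) (hρ : 0 < ρ) :
    StrongConvexOnSet Set.univ (2 * ρ * σ)
      (fun z => f z + ρ * ‖Matrix.toEuclideanLin M z - b‖ ^ 2) := by
  have hgram (w : EuclideanSpace ℝ (Fin n ⊕ Fin m)) : σ * ‖w‖ ^ 2 ≤ ‖toEuclideanLin M w‖ ^ 2 :=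
    inner_toEuclideanLin_transpose_mul_self M w ▸
      hG.mul_sq_norm_le_inner_toEuclideanLin (fun i => hσ.2 ⟨i, rfl⟩) w
  have hpen := (strongConvexOn_univ_const_mul_sq_norm ρ).comp_linearMap_sub
    (by positivity) (toEuclideanLin M) b hgram
  exact (hf.add_strongConvexOn hpen).strongConvexOnSet

/-- Quadratic penalization of the linear coupling constraints: if `f` is jointly convex
and the concatenated matrix `M = (A B)` has linearly independent columns, then
`z ↦ f(z) + ρ ‖M z - b‖₂²` is strongly convex with constant `2ρσ`, where `σ > 0` is the
smallest eigenvalue of the Gram matrix `Mᵀ M`. -/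
theorem penalized_strongly_convex {n m p : ℕ}
    (A : Matrix (Fin p) (Fin n) ℝ) (B : Matrix (Fin p) (Fin m) ℝ)
    (b : EuclideanSpace ℝ (Fin p))
    (f : EuclideanSpace ℝ (Fin n ⊕ Fin m) → ℝ)
    (hf : ConvexOn ℝ Set.univ f)
    (M : Matrix (Fin p) (Fin n ⊕ Fin m) ℝ) (hM : M = Matrix.fromCols A B)
    (hinj : Function.Injective (Matrix.toEuclideanLin M))
    (hG : (Mᵀ * M).IsHermitian)
    (σ : ℝ) (hσ : IsLeast (Set.range hG.eigenvalues) σ) (hσpos : 0 < σ)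
    (ρ : ℝ) (hρ : 0 < ρ) :
    StrongConvexOnSet Set.univ (2 * ρ * σ)
      (fun z => f z + ρ * ‖Matrix.toEuclideanLin M z - b‖ ^ 2) :=
  penalized_strongly_convex_general b f hf M hG σ hσ ρ hρ
end

section
/- Let Q : D → ℝ be convex on a compact convex set D ⊆ ℝ^m, and let (Q^k)_k be a nondecreasing sequence of functions on D (Q^k ≤ Q^{k+1} ≤ Q on D) each L-Lipschitz for a common constant L. If (x^k) ⊆ D is a sequence with lim_{k→∞} (Q(x^k) - Q^k(x^k)) = 0, then also lim_{k→∞} (Q(x^k) - Q^{k-1}(x^k)) = 0. -/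
open Filter Topology Set

/-!
The lower approximations `Q^k` increase pointwise and are bounded above by `Q`, so they converge
pointwise; being equi-Lipschitz, their limit is Lipschitz too, and by Dini's theorem the convergence
is uniform on the compact set `D`. Hence `Q^k - Q^{k-1} → 0` uniformly on `D`, and the shifted gap
`Q(x^k) - Q^{k-1}(x^k)` is the gap `Q(x^k) - Q^k(x^k)` plus a term that vanishes in the limit.
-/

theorem LipschitzOnWith.of_tendsto {α β ι : Type*} [PseudoMetricSpace α] [PseudoMetricSpace β]
    {l : Filter ι} [l.NeBot] {F : ι → α → β} {f : α → β} {s : Set α} {K : NNReal}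
    (hF : ∀ i, LipschitzOnWith K (F i) s) (h : ∀ x ∈ s, Tendsto (F · x) l (𝓝 (f x))) :
    LipschitzOnWith K f s :=
  LipschitzOnWith.of_dist_le_mul fun x hx y hy =>
    le_of_tendsto' ((h x hx).dist (h y hy)) fun i => (hF i).dist_le_mul x hx y hy

theorem tendstoUniformlyOn_ciSup_of_lipschitzOnWith {α ι : Type*} [PseudoMetricSpace α]
    [SemilatticeSup ι] [Nonempty ι]
    {F : ι → α → ℝ} {s : Set α} {K : NNReal} (hs : IsCompact s)
    (hF : ∀ i, LipschitzOnWith K (F i) s) (hmono : ∀ x ∈ s, Monotone (F · x))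
    (hbdd : ∀ x ∈ s, BddAbove (range (F · x))) :
    TendstoUniformlyOn F (fun x => ⨆ i, F i x) atTop s := by
  have hlim : ∀ x ∈ s, Tendsto (F · x) atTop (𝓝 (⨆ i, F i x)) :=
    fun x hx => tendsto_atTop_ciSup (hmono x hx) (hbdd x hx)
  exact Monotone.tendstoUniformlyOn_of_forall_tendsto hs (fun i => (hF i).continuousOn) hmono
    (LipschitzOnWith.of_tendsto hF hlim).continuousOn hlim

theorem UniformCauchySeqOn.tendsto_apply_sub_apply {α β ι κ : Type*} [SeminormedAddCommGroup β]
    [SemilatticeSup ι] [Nonempty ι] {F : ι → α → β} {s : Set α} (hF : UniformCauchySeqOn F atTop s)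
    {l : Filter κ} {a b : κ → ι} (ha : Tendsto a l atTop) (hb : Tendsto b l atTop) {x : κ → α}
    (hx : ∀ n, x n ∈ s) :
    Tendsto (fun n => F (a n) (x n) - F (b n) (x n)) l (𝓝 0) := by
  refine Metric.tendsto_nhds.2 fun ε hε => ?_
  obtain ⟨N, hN⟩ := Metric.uniformCauchySeqOn_iff.1 hF ε hε
  filter_upwards [ha.eventually_ge_atTop N, hb.eventually_ge_atTop N] with n han hbn
  rw [dist_zero_right, ← dist_eq_norm]
  exact hN _ han _ hbn _ (hx n)

theorem shifted_gap_tendsto_zero_general {m : ℕ}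
    (D : Set (EuclideanSpace ℝ (Fin m))) (hDcomp : IsCompact D)
    (Q : EuclideanSpace ℝ (Fin m) → ℝ)
    (Qk : ℕ → EuclideanSpace ℝ (Fin m) → ℝ)
    (L : NNReal) (hLip : ∀ k, LipschitzOnWith L (Qk k) D)
    (hmono : ∀ k, ∀ x ∈ D, Qk k x ≤ Qk (k + 1) x)
    (hle : ∀ k, ∀ x ∈ D, Qk k x ≤ Q x)
    (x : ℕ → EuclideanSpace ℝ (Fin m)) (hx : ∀ k, x k ∈ D)
    (hconv : Tendsto (fun k => Q (x k) - Qk k (x k)) atTop (nhds 0)) :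
    Tendsto (fun k => Q (x k) - Qk (k - 1) (x k)) atTop (nhds 0) := by
  have hmono' : ∀ y ∈ D, Monotone (Qk · y) :=
    fun y hy => monotone_nat_of_le_succ fun k => hmono k y hy
  have hbdd : ∀ y ∈ D, BddAbove (range (Qk · y)) :=
    fun y hy => ⟨Q y, forall_mem_range.2 fun k => hle k y hy⟩
  have hstep : Tendsto (fun k => Qk k (x k) - Qk (k - 1) (x k)) atTop (𝓝 0) :=
    (tendstoUniformlyOn_ciSup_of_lipschitzOnWith hDcomp hLip hmono' hbdd).uniformCauchySeqOn
      |>.tendsto_apply_sub_apply tendsto_id (tendsto_sub_atTop_nat 1) hx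
  convert hconv.add hstep using 1
  · ext k
    ring
  · simp

/-- Lemma A.1 (Girardeau–Leclère–Philpott): if `(Q^k)` is a nondecreasing sequence of
uniformly Lipschitz lower approximations of a convex `Q` on a compact convex set and
`Q(x^k) - Q^k(x^k) → 0` along a sequence `(x^k) ⊆ D`, then also
`Q(x^k) - Q^{k-1}(x^k) → 0`. -/
theorem shifted_gap_tendsto_zero {m : ℕ}
    (D : Set (EuclideanSpace ℝ (Fin m))) (hDconv : Convex ℝ D) (hDcomp : IsCompact D)
    (Q : EuclideanSpace ℝ (Fin m) → ℝ) (hQ : ConvexOn ℝ D Q)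
    (Qk : ℕ → EuclideanSpace ℝ (Fin m) → ℝ)
    (L : NNReal) (hLip : ∀ k, LipschitzOnWith L (Qk k) D)
    (hmono : ∀ k, ∀ x ∈ D, Qk k x ≤ Qk (k + 1) x)
    (hle : ∀ k, ∀ x ∈ D, Qk k x ≤ Q x)
    (x : ℕ → EuclideanSpace ℝ (Fin m)) (hx : ∀ k, x k ∈ D)
    (hconv : Tendsto (fun k => Q (x k) - Qk k (x k)) atTop (nhds 0)) :
    Tendsto (fun k => Q (x k) - Qk (k - 1) (x k)) atTop (nhds 0) :=
  shifted_gap_tendsto_zero_general D hDcomp Q Qk L hLip hmono hle x hx hconv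
end

section
/- If Q_{t+1}^k ≤ Q_{t+1} are convex functions on 𝒳_t, f_t(·,·,ξ_m) is strongly convex with constant α_{tm} on 𝒳_t × 𝒳_{t-1}, and 𝔔̲_t^k(x, ξ_m) = inf { f_t(y, x, ξ_m) + Q_{t+1}^k(y) : y ∈ X_t(x, ξ_m) } with X_t(x, ξ_m) defined by linear equality constraints and jointly convex inequality constraints and the infimum attained, then 𝔔̲_t^k(·, ξ_m) is strongly convex on 𝒳_{t-1} with constant α_{tm}, and the true stage value function 𝔔_t(·, ξ_m) satisfies 𝔔_t(x, ξ_m) ≥ 𝔔̲_t^k(x, ξ_m) for all x ∈ 𝒳_{t-1}. -/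
/-!
If `y₁`, `y₂` attain the approximate value at `x₁`, `x₂`, then by joint convexity of the
constraints `t y₁ + (1 - t) y₂` is feasible at `t x₁ + (1 - t) x₂`, and joint strong convexity of
`f + Q^k` bounds its cost. The quadratic term survives the minimisation over `y` because
`‖(y₂ - y₁, x₂ - x₁)‖ ≥ ‖x₂ - x₁‖` in the Euclidean product. The lower bound is monotonicity of
the infimum in the cost-to-go `Q^k ≤ Q`.
-/

open Set

open WithLp

namespace StrongConvexOnSet

variable {E : Type*} [NormedAddCommGroup E] [NormedSpace ℝ E] {s u : Set E} {a : ℝ}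
  {f g : E → ℝ}

theorem subset (hf : StrongConvexOnSet s a f) (hus : u ⊆ s) : StrongConvexOnSet u a f :=
  fun x hx y hy => hf x (hus hx) y (hus hy)

theorem add_convexOn (hf : StrongConvexOnSet s a f) (hg : ConvexOn ℝ s g) :
    StrongConvexOnSet s a (f + g) := by
  intro x hx y hy t ht₀ ht₁
  have hgc := hg.2 hx hy ht₀ (sub_nonneg.2 ht₁) (add_sub_cancel t 1)
  simp only [Pi.add_apply, smul_eq_mul] at hgc ⊢
  linarith [hf x hx y hy t ht₀ ht₁]

theorem of_isLeast_fiber {F : Type*} [NormedAddCommGroup F] [NormedSpace ℝ F]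
    {p : ENNReal} [Fact (1 ≤ p)] {S : Set (WithLp p (F × E))} {φ : WithLp p (F × E) → ℝ}
    (hφ : StrongConvexOnSet S a φ) (hS : Convex ℝ S) (ha : 0 ≤ a) (hs : Convex ℝ s)
    {v : E → ℝ}
    (hv : ∀ x ∈ s, IsLeast ((fun y => φ (toLp p (y, x))) '' {y | toLp p (y, x) ∈ S}) (v x)) :
    StrongConvexOnSet s a v := by
  intro x₁ hx₁ x₂ hx₂ t ht₀ ht₁
  obtain ⟨⟨y₁, hy₁, hv₁⟩, -⟩ := hv x₁ hx₁
  obtain ⟨⟨y₂, hy₂, hv₂⟩, -⟩ := hv x₂ hx₂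
  have ht₁' : 0 ≤ 1 - t := sub_nonneg.2 ht₁
  set w₁ := toLp p (y₁, x₁)
  set w₂ := toLp p (y₂, x₂)
  have hcomb : t • w₁ + (1 - t) • w₂ =
      toLp p (t • y₁ + (1 - t) • y₂, t • x₁ + (1 - t) • x₂) := rfl
  have hmem : toLp p (t • y₁ + (1 - t) • y₂, t • x₁ + (1 - t) • x₂) ∈ S :=
    hcomb ▸ hS hy₁ hy₂ ht₀ ht₁' (add_sub_cancel t 1)
  have hnorm : ‖x₂ - x₁‖ ≤ ‖w₂ - w₁‖ := WithLp.norm_snd_le F (w₂ - w₁)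
  calc v (t • x₁ + (1 - t) • x₂)
      ≤ φ (toLp p (t • y₁ + (1 - t) • y₂, t • x₁ + (1 - t) • x₂)) :=
        (hv _ (hs hx₁ hx₂ ht₀ ht₁' (add_sub_cancel t 1))).2 (mem_image_of_mem _ hmem)
    _ ≤ t * φ w₁ + (1 - t) * φ w₂ - a / 2 * (t * (1 - t)) * ‖w₂ - w₁‖ ^ 2 :=
        hcomb ▸ hφ w₁ hy₁ w₂ hy₂ t ht₀ ht₁
    _ ≤ t * v x₁ + (1 - t) * v x₂ - a / 2 * (t * (1 - t)) * ‖x₂ - x₁‖ ^ 2 := by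
        rw [← hv₁, ← hv₂]
        have : 0 ≤ a / 2 * (t * (1 - t)) := by positivity
        gcongr

end StrongConvexOnSet

theorem Convex.sep_linear_eq_and_forall_le {E F ι : Type*} [AddCommGroup E] [Module ℝ E]
    [AddCommGroup F] [Module ℝ F] {K : Set E} (hK : Convex ℝ K) (L : E →ₗ[ℝ] F) (b : F)
    {g : ι → E → ℝ} (hg : ∀ i, ConvexOn ℝ K (g i)) :
    Convex ℝ {p ∈ K | L p = b ∧ ∀ i, g i p ≤ 0} := by
  have hset : {p ∈ K | L p = b ∧ ∀ i, g i p ≤ 0} =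
      L ⁻¹' {b} ∩ (K ∩ ⋂ i, {p ∈ K | g i p ≤ 0}) := by
    ext p
    simp only [mem_ofPred_eq, mem_inter_iff, mem_preimage, mem_singleton_iff, mem_iInter]
    grind
  rw [hset]
  exact ((convex_singleton b).linear_preimage L).inter
    (hK.inter (convex_iInter fun i => (hg i).convex_le 0))

theorem IsLeast.le_csInf_image {α β : Type*} [ConditionallyCompleteLattice β] {S : Set α}
    {φ ψ : α → β} {m : β} (hm : IsLeast (φ '' S) m) (hφψ : ∀ y ∈ S, φ y ≤ ψ y) :
    m ≤ sInf (ψ '' S) := by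
  obtain ⟨y, hy, -⟩ := hm.1
  exact le_csInf ⟨_, mem_image_of_mem ψ hy⟩
    (forall_mem_image.2 fun y hy => (hm.2 (mem_image_of_mem φ hy)).trans (hφψ y hy))

theorem approx_stage_value_strongly_convex_general {n P q : ℕ}
    (Xt Xt1 : Set (EuclideanSpace ℝ (Fin n)))
    (hXt : Convex ℝ Xt) (hXt1 : Convex ℝ Xt1)
    (Qnext Qnextlow : EuclideanSpace ℝ (Fin n) → ℝ)
    (hQnextlow : ConvexOn ℝ Xt Qnextlow)
    (hle : ∀ y ∈ Xt, Qnextlow y ≤ Qnext y)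
    (f : WithLp 2 (EuclideanSpace ℝ (Fin n) × EuclideanSpace ℝ (Fin n)) → ℝ)
    (a : ℝ) (ha : 0 < a)
    (hf : StrongConvexOnSet
      ((WithLp.equiv 2 (EuclideanSpace ℝ (Fin n) × EuclideanSpace ℝ (Fin n))).symm ''
        (Xt ×ˢ Xt1)) a f)
    (A B : EuclideanSpace ℝ (Fin n) →ₗ[ℝ] EuclideanSpace ℝ (Fin P))
    (b : EuclideanSpace ℝ (Fin P))
    (g : Fin q → EuclideanSpace ℝ (Fin n) × EuclideanSpace ℝ (Fin n) → ℝ)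
    (hg : ∀ i, ConvexOn ℝ (Xt ×ˢ Xt1) (g i))
    (Qlowval : EuclideanSpace ℝ (Fin n) → ℝ)
    (hatt : ∀ x ∈ Xt1, IsLeast
      ((fun y => f ((WithLp.equiv 2 _).symm (y, x)) + Qnextlow y) ''
        {y ∈ Xt | A y + B x = b ∧ ∀ i, g i (y, x) ≤ 0}) (Qlowval x))
    (Qval : EuclideanSpace ℝ (Fin n) → ℝ)
    (hQval : ∀ x, Qval x = sInf
      ((fun y => f ((WithLp.equiv 2 _).symm (y, x)) + Qnext y) ''
        {y ∈ Xt | A y + B x = b ∧ ∀ i, g i (y, x) ≤ 0})) :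
    StrongConvexOnSet Xt1 a Qlowval ∧ ∀ x ∈ Xt1, Qlowval x ≤ Qval x := by
  set T := {p ∈ Xt ×ˢ Xt1 | A p.1 + B p.2 = b ∧ ∀ i, g i p ≤ 0}
  have hT : Convex ℝ (ofLp ⁻¹' T) :=
    ((hXt.prod hXt1).sep_linear_eq_and_forall_le (A.coprod B) b hg).linear_preimage
      (WithLp.linearEquiv 2 ℝ _).toLinearMap
  set projY : WithLp 2 (EuclideanSpace ℝ (Fin n) × EuclideanSpace ℝ (Fin n)) →ₗ[ℝ] _ :=
    LinearMap.fst ℝ _ _ ∘ₗ (WithLp.linearEquiv 2 ℝ _).toLinearMap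
  have hcost : StrongConvexOnSet (ofLp ⁻¹' T) a (f + Qnextlow ∘ projY) :=
    (hf.subset fun w hw => ⟨ofLp w, hw.1, rfl⟩).add_convexOn
      ((hQnextlow.comp_linearMap projY).subset (fun w hw => hw.1.1) hT)
  refine ⟨hcost.of_isLeast_fiber hT ha.le hXt1 fun x hx => ?_, fun x hx => ?_⟩
  · have hfiber : {y | toLp 2 (y, x) ∈ ofLp ⁻¹' T} =
        {y ∈ Xt | A y + B x = b ∧ ∀ i, g i (y, x) ≤ 0} := by
      ext y
      simp [T, hx]
    rw [hfiber]
    exact hatt x hx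
  · rw [hQval x]
    exact (hatt x hx).le_csInf_image fun y hy => add_le_add_right (hle y hy.1) _

/-- Strong convexity and validity of the approximate stage value function
`𝔔̲_t^k(·, ξ_m)`: it is strongly convex with constant `α_tm` on `𝒳_{t-1}` and lower
bounds the true stage value function `𝔔_t(·, ξ_m)`. Strong convexity of `f_t(·,·,ξ_m)`
is with respect to the Euclidean norm on the product, modelled via `WithLp 2`. -/
theorem approx_stage_value_strongly_convex {n P q : ℕ}
    (Xt Xt1 : Set (EuclideanSpace ℝ (Fin n)))
    (hXt : Convex ℝ Xt) (hXt1 : Convex ℝ Xt1)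
    (hXtne : Xt.Nonempty) (hXt1ne : Xt1.Nonempty)
    (hXtcp : IsCompact Xt) (hXt1cp : IsCompact Xt1)
    (Qnext Qnextlow : EuclideanSpace ℝ (Fin n) → ℝ)
    (hQnext : ConvexOn ℝ Xt Qnext) (hQnextlow : ConvexOn ℝ Xt Qnextlow)
    (hle : ∀ y ∈ Xt, Qnextlow y ≤ Qnext y)
    (f : WithLp 2 (EuclideanSpace ℝ (Fin n) × EuclideanSpace ℝ (Fin n)) → ℝ)
    (a : ℝ) (ha : 0 < a)
    (hf : StrongConvexOnSet
      ((WithLp.equiv 2 (EuclideanSpace ℝ (Fin n) × EuclideanSpace ℝ (Fin n))).symm ''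
        (Xt ×ˢ Xt1)) a f)
    (A B : EuclideanSpace ℝ (Fin n) →ₗ[ℝ] EuclideanSpace ℝ (Fin P))
    (b : EuclideanSpace ℝ (Fin P))
    (g : Fin q → EuclideanSpace ℝ (Fin n) × EuclideanSpace ℝ (Fin n) → ℝ)
    (hg : ∀ i, ConvexOn ℝ (Xt ×ˢ Xt1) (g i))
    (Qlowval : EuclideanSpace ℝ (Fin n) → ℝ)
    (hatt : ∀ x ∈ Xt1, IsLeast
      ((fun y => f ((WithLp.equiv 2 _).symm (y, x)) + Qnextlow y) ''
        {y ∈ Xt | A y + B x = b ∧ ∀ i, g i (y, x) ≤ 0}) (Qlowval x))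
    (Qval : EuclideanSpace ℝ (Fin n) → ℝ)
    (hQval : ∀ x, Qval x = sInf
      ((fun y => f ((WithLp.equiv 2 _).symm (y, x)) + Qnext y) ''
        {y ∈ Xt | A y + B x = b ∧ ∀ i, g i (y, x) ≤ 0})) :
    StrongConvexOnSet Xt1 a Qlowval ∧ ∀ x ∈ Xt1, Qlowval x ≤ Qval x :=
  approx_stage_value_strongly_convex_general Xt Xt1 hXt hXt1 Qnext Qnextlow hQnextlow hle f a ha hf
    A B b g hg Qlowval hatt Qval hQval
end

section
/- Let D be a nonempty convex compact subset of ℝ^n and let Q(x) = inf { f(y,x) + R(y) : y ∈ Y, A y + B x = b, g(y,x) ≤ 0 } where f is jointly convex and continuous, R convex and Lipschitz, g componentwise jointly convex and continuous, Y convex compact. If there exists ε > 0 such that for every x in the ε-enlargement D^ε of D the feasible set is nonempty and satisfies a Slater-type condition, then Q is convex and Lipschitz continuous on D. -/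
open Set

/-- Lemma 5.1: convexity and Lipschitz continuity of the recourse function
`Q(x) = inf { f(y,x) + R(y) : y ∈ Y, A y + B x = b, g(y,x) ≤ 0 }` on a compact set `D`,
under joint convexity/continuity of the data and a Slater-type condition on the
`ε`-enlargement of `D`. -/
theorem recourse_function_convex_lipschitz {n nn P q : ℕ}
    (D : Set (EuclideanSpace ℝ (Fin n))) (Y : Set (EuclideanSpace ℝ (Fin nn)))
    (hD : Convex ℝ D) (hDne : D.Nonempty) (hDcp : IsCompact D)
    (hY : Convex ℝ Y) (hYcp : IsCompact Y)
    (ε : ℝ) (hε : 0 < ε)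
    (f : EuclideanSpace ℝ (Fin nn) × EuclideanSpace ℝ (Fin n) → ℝ)
    (hf : ConvexOn ℝ (Y ×ˢ Metric.cthickening ε D) f)
    (hfc : ContinuousOn f (Y ×ˢ Metric.cthickening ε D))
    (R : EuclideanSpace ℝ (Fin nn) → ℝ) (hR : ConvexOn ℝ Y R)
    (LR : NNReal) (hRLip : LipschitzOnWith LR R Y)
    (A : EuclideanSpace ℝ (Fin nn) →ₗ[ℝ] EuclideanSpace ℝ (Fin P))
    (B : EuclideanSpace ℝ (Fin n) →ₗ[ℝ] EuclideanSpace ℝ (Fin P))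
    (b : EuclideanSpace ℝ (Fin P))
    (g : Fin q → EuclideanSpace ℝ (Fin nn) × EuclideanSpace ℝ (Fin n) → ℝ)
    (hg : ∀ i, ConvexOn ℝ (Y ×ˢ Metric.cthickening ε D) (g i))
    (hgc : ∀ i, ContinuousOn (g i) (Y ×ˢ Metric.cthickening ε D))
    (hSlater : ∀ x ∈ Metric.cthickening ε D,
      ∃ y ∈ Y, A y + B x = b ∧ ∀ i, g i (y, x) < 0)
    (Q : EuclideanSpace ℝ (Fin n) → ℝ)
    (hQ : ∀ x, Q x = sInf ((fun y => f (y, x) + R y) ''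
      {y ∈ Y | A y + B x = b ∧ ∀ i, g i (y, x) ≤ 0})) :
    ConvexOn ℝ D Q ∧ ∃ L : NNReal, LipschitzOnWith L Q D := by
  set E := Metric.cthickening ε D with hE
  have hDE : D ⊆ E := Metric.self_subset_cthickening D
  have hEcp : IsCompact E := hDcp.cthickening
  have hEconv : Convex ℝ E := hD.cthickening ε
  have hYcl : IsClosed Y := hYcp.isClosed
  -- continuity of R on Y
  have hRc : ContinuousOn R Y := hRLip.continuousOn
  -- for each x ∈ E, the objective is continuous on Y
  have hφc : ∀ x ∈ E, ContinuousOn (fun y => f (y, x) + R y) Y := by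
    intro x hx
    refine ContinuousOn.add ?_ hRc
    have hmap : MapsTo (fun y : EuclideanSpace ℝ (Fin nn) => (y, x)) Y (Y ×ˢ E) :=
      fun y hy => ⟨hy, hx⟩
    exact hfc.comp ((continuous_id.prodMk continuous_const).continuousOn) hmap
  -- the feasible set is compact and nonempty; the minimum is attained
  have attain : ∀ x ∈ E, ∃ y, (y ∈ Y ∧ A y + B x = b ∧ ∀ i, g i (y, x) ≤ 0) ∧
      Q x = f (y, x) + R y ∧
      ∀ y' ∈ Y, A y' + B x = b → (∀ i, g i (y', x) ≤ 0) →
        f (y, x) + R y ≤ f (y', x) + R y' := by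
    intro x hx
    set S : Set (EuclideanSpace ℝ (Fin nn)) :=
      {y ∈ Y | A y + B x = b ∧ ∀ i, g i (y, x) ≤ 0} with hS
    have hSne : S.Nonempty := by
      obtain ⟨y, hyY, hyA, hyg⟩ := hSlater x hx
      exact ⟨y, hyY, hyA, fun i => (hyg i).le⟩
    have hSsubY : S ⊆ Y := fun y hy => hy.1
    have hScp : IsCompact S := by
      have h1 : S = (Y ∩ (fun y => A y + B x) ⁻¹' {b}) ∩
          (⋂ i : Fin q, Y ∩ (fun y => g i (y, x)) ⁻¹' Iic 0) := by
        ext y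
        simp only [hS, mem_inter_iff, mem_iInter, mem_preimage, mem_singleton_iff,
          mem_Iic, mem_setOf_eq]
        constructor
        · rintro ⟨h1, h2, h3⟩; exact ⟨⟨h1, h2⟩, fun i => ⟨h1, h3 i⟩⟩
        · rintro ⟨⟨h1, h2⟩, h3⟩; exact ⟨h1, h2, fun i => (h3 i).2⟩
      have hclosed : IsClosed ((Y ∩ (fun y => A y + B x) ⁻¹' {b}) ∩
          (⋂ i : Fin q, Y ∩ (fun y => g i (y, x)) ⁻¹' Iic 0)) := by
        refine IsClosed.inter ?_ (isClosed_iInter fun i => ?_)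
        · exact hYcl.inter (isClosed_singleton.preimage
            (((A.continuous_of_finiteDimensional).add continuous_const)))
        · refine ContinuousOn.preimage_isClosed_of_isClosed ?_ hYcl isClosed_Iic
          have hmap : MapsTo (fun y : EuclideanSpace ℝ (Fin nn) => (y, x)) Y (Y ×ˢ E) :=
            fun y hy => ⟨hy, hx⟩
          exact (hgc i).comp ((continuous_id.prodMk continuous_const).continuousOn) hmap
      rw [h1] at hSne ⊢
      rw [← h1] at hSne
      exact hYcp.of_isClosed_subset hclosed (by rw [← h1]; exact hSsubY)
    obtain ⟨y, hyS, hymin⟩ := hScp.exists_isMinOn hSne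
      ((hφc x hx).mono hSsubY)
    refine ⟨y, hyS, ?_, fun y' h1 h2 h3 => hymin ⟨h1, h2, h3⟩⟩
    rw [hQ x]
    refine le_antisymm (csInf_le ⟨f (y, x) + R y, ?_⟩ ⟨y, hyS, rfl⟩) ?_
    · rintro z ⟨y', hy', rfl⟩
      exact hymin hy'
    · refine le_csInf ⟨f (y, x) + R y, ⟨y, hyS, rfl⟩⟩ ?_
      rintro z ⟨y', hy', rfl⟩
      exact hymin hy'
  -- convexity on E
  have QconvexE : ConvexOn ℝ E Q := by
    refine ⟨hEconv, fun x0 hx0 x1 hx1 la mu hla hmu hlm => ?_⟩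
    obtain ⟨y0, ⟨hy0Y, hy0A, hy0g⟩, hQ0, _⟩ := attain x0 hx0
    obtain ⟨y1, ⟨hy1Y, hy1A, hy1g⟩, hQ1, _⟩ := attain x1 hx1
    have hxm : la • x0 + mu • x1 ∈ E := hEconv hx0 hx1 hla hmu hlm
    obtain ⟨ym, _, hQm, hminm⟩ := attain _ hxm
    set yc := la • y0 + mu • y1 with hyc
    have hprod : ((yc, la • x0 + mu • x1) :
        EuclideanSpace ℝ (Fin nn) × EuclideanSpace ℝ (Fin n)) =
        la • (y0, x0) + mu • (y1, x1) := rfl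
    have hycY : yc ∈ Y := hY hy0Y hy1Y hla hmu hlm
    have hycA : A yc + B (la • x0 + mu • x1) = b := by
      simp only [hyc, map_add, map_smul]
      rw [show la • A y0 + mu • A y1 + (la • B x0 + mu • B x1) =
        la • (A y0 + B x0) + mu • (A y1 + B x1) by module]
      rw [hy0A, hy1A, ← add_smul, hlm, one_smul]
    have hycg : ∀ i, g i (yc, la • x0 + mu • x1) ≤ 0 := by
      intro i
      have := (hg i).2 (⟨hy0Y, hx0⟩ : (y0, x0) ∈ Y ×ˢ E)
        (⟨hy1Y, hx1⟩ : (y1, x1) ∈ Y ×ˢ E) hla hmu hlm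
      rw [hprod]
      refine this.trans ?_
      have := mul_nonpos_of_nonneg_of_nonpos hla (hy0g i)
      have := mul_nonpos_of_nonneg_of_nonpos hmu (hy1g i)
      simp only [smul_eq_mul]; linarith
    have hle := hminm yc hycY hycA hycg
    have hfconv := hf.2 (⟨hy0Y, hx0⟩ : (y0, x0) ∈ Y ×ˢ E)
      (⟨hy1Y, hx1⟩ : (y1, x1) ∈ Y ×ˢ E) hla hmu hlm
    have hRconv := hR.2 hy0Y hy1Y hla hmu hlm
    rw [hQm, hQ0, hQ1]
    calc f (ym, la • x0 + mu • x1) + R ym ≤ f (yc, la • x0 + mu • x1) + R yc := hle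
      _ ≤ (la * f (y0, x0) + mu * f (y1, x1)) + (la * R y0 + mu * R y1) := by
          rw [hprod]
          simp only [smul_eq_mul] at hfconv hRconv
          exact add_le_add hfconv hRconv
      _ = la • (f (y0, x0) + R y0) + mu • (f (y1, x1) + R y1) := by
          simp only [smul_eq_mul]; ring
  -- uniform bound on Q on E
  obtain ⟨Mf, hMf⟩ := (hYcp.prod hEcp).exists_bound_of_continuousOn hfc
  obtain ⟨MR, hMR⟩ := hYcp.exists_bound_of_continuousOn hRc
  set M := Mf + MR with hM
  have Qbound : ∀ x ∈ E, |Q x| ≤ M := by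
    intro x hx
    obtain ⟨y, ⟨hyY, _, _⟩, hQx, _⟩ := attain x hx
    rw [hQx]
    have h1 := hMf (y, x) ⟨hyY, hx⟩
    have h2 := hMR y hyY
    rw [Real.norm_eq_abs] at h1 h2
    calc |f (y, x) + R y| ≤ |f (y, x)| + |R y| := abs_add_le _ _
      _ ≤ Mf + MR := add_le_add h1 h2
  have hMnn : 0 ≤ M := by
    obtain ⟨x0, hx0⟩ := hDne
    exact (abs_nonneg _).trans (Qbound x0 (hDE hx0))
  -- one-sided Lipschitz estimate
  have key : ∀ x ∈ D, ∀ x' ∈ D, Q x' - Q x ≤ (2 * M / ε) * ‖x' - x‖ := by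
    intro x hx x' hx'
    rcases eq_or_ne x' x with rfl | hne
    · simp
    · set d := ‖x' - x‖ with hd
      have hdpos : 0 < d := by
        rw [hd, norm_pos_iff]; exact sub_ne_zero.mpr hne
      set z := x' + (ε / d) • (x' - x) with hz
      have hzE : z ∈ E := by
        refine Metric.mem_cthickening_of_dist_le z x' ε D hx' ?_
        rw [dist_eq_norm]
        have : z - x' = (ε / d) • (x' - x) := by rw [hz]; abel
        rw [this, norm_smul, Real.norm_eq_abs, abs_of_pos (div_pos hε hdpos), ← hd,
          div_mul_cancel₀ ε hdpos.ne']
      have hsum : ε / (d + ε) + d / (d + ε) = 1 := by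
        field_simp
        ring
      have hcomb : (ε / (d + ε)) • x + (d / (d + ε)) • z = x' := by
        rw [hz]
        match_scalars <;> field_simp <;> ring
      have hconv := QconvexE.2 (hDE hx) hzE
        (by positivity : (0:ℝ) ≤ ε / (d + ε))
        (by positivity : (0:ℝ) ≤ d / (d + ε)) hsum
      rw [hcomb] at hconv
      simp only [smul_eq_mul] at hconv
      have hQx := abs_le.mp (Qbound x (hDE hx))
      have hQz := abs_le.mp (Qbound z hzE)
      have h1 : Q x' - Q x ≤ (d / (d + ε)) * (Q z - Q x) := by nlinarith
      have h2 : (d / (d + ε)) * (Q z - Q x) ≤ (2 * M / ε) * d := by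
        have hdiff : Q z - Q x ≤ 2 * M := by linarith [hQx.1, hQz.2]
        rw [div_mul_eq_mul_div, div_le_iff₀ (by positivity)]
        rw [div_mul_eq_mul_div, div_mul_eq_mul_div, le_div_iff₀ hε]
        nlinarith [mul_le_mul_of_nonneg_left hdiff (show (0:ℝ) ≤ d * ε by positivity),
          mul_nonneg (mul_nonneg hMnn hdpos.le) hdpos.le]
      exact h1.trans h2
  refine ⟨QconvexE.subset hDE hD, ⟨Real.toNNReal (2 * M / ε), ?_⟩⟩
  rw [lipschitzOnWith_iff_dist_le_mul]
  intro x hx y hy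
  rw [Real.dist_eq, dist_eq_norm]
  have hc : (Real.toNNReal (2 * M / ε) : ℝ) = 2 * M / ε :=
    Real.coe_toNNReal _ (by positivity)
  rw [hc, abs_sub_le_iff]
  refine ⟨key y hy x hx, ?_⟩
  have := key x hx y hy
  rwa [norm_sub_rev] at this
end

section
/- Suppose h : ℝ^{n} × ℝ^{m} → ℝ is strongly convex in the joint variable with constant α with respect to the norm ‖(y,x)‖ = sqrt(‖y‖₂² + ‖x‖₂²). Then for any convex set S ⊆ ℝ^n × ℝ^m whose x-section S_x = { y : (y,x) ∈ S } depends on x with convex graph, the partial minimization φ(x) = inf_{y ∈ S_x} h(y,x), wherever finite and attained, is strongly convex in x with constant α with respect to ‖·‖₂ on ℝ^m. -/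
open Set

/-- Abstract form of Proposition 2.2: strong convexity (w.r.t. the norm
`‖(y,x)‖ = sqrt(‖y‖₂² + ‖x‖₂²)`, modelled via `WithLp 2`) survives partial minimization
over a constraint set `S` with convex graph: `φ(x) = min_{y : (y,x) ∈ S} h(y,x)` is
strongly convex in `x` with the same constant, wherever the minimum is attained. -/
theorem partial_minimization_strongly_convex {nF mE : ℕ}
    (S : Set (EuclideanSpace ℝ (Fin nF) × EuclideanSpace ℝ (Fin mE)))
    (hS : Convex ℝ S)
    (h : WithLp 2 (EuclideanSpace ℝ (Fin nF) × EuclideanSpace ℝ (Fin mE)) → ℝ)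
    (a : ℝ) (ha : 0 < a)
    (hh : StrongConvexOnSet
      ((WithLp.equiv 2 (EuclideanSpace ℝ (Fin nF) × EuclideanSpace ℝ (Fin mE))).symm '' S)
      a h)
    (φ : EuclideanSpace ℝ (Fin mE) → ℝ)
    (hφ : ∀ x ∈ Prod.snd '' S, IsLeast
      ((fun y => h ((WithLp.equiv 2 _).symm (y, x))) '' {y | (y, x) ∈ S}) (φ x)) :
    StrongConvexOnSet (Prod.snd '' S) a φ := by
  intro x₁ hx₁ x₂ hx₂ t ht0 ht1
  obtain ⟨hφ₁mem, hφ₁lb⟩ := hφ x₁ hx₁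
  obtain ⟨hφ₂mem, hφ₂lb⟩ := hφ x₂ hx₂
  obtain ⟨y₁, hy₁S, hy₁⟩ := hφ₁mem
  obtain ⟨y₂, hy₂S, hy₂⟩ := hφ₂mem
  -- combined point
  have hmemS : (t • y₁ + (1 - t) • y₂, t • x₁ + (1 - t) • x₂) ∈ S := by
    have h1t : (0:ℝ) ≤ 1 - t := by linarith
    have := hS hy₁S hy₂S ht0 h1t (by ring)
    simpa [Prod.smul_mk, Prod.mk_add_mk] using this
  have hxmem : t • x₁ + (1 - t) • x₂ ∈ Prod.snd '' S := ⟨_, hmemS, rfl⟩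
  obtain ⟨hφtmem, hφtlb⟩ := hφ _ hxmem
  have key := hh ((WithLp.equiv 2 _).symm (y₁, x₁)) ⟨_, hy₁S, rfl⟩
    ((WithLp.equiv 2 _).symm (y₂, x₂)) ⟨_, hy₂S, rfl⟩ t ht0 ht1
  have hval : φ (t • x₁ + (1 - t) • x₂) ≤
      h (t • (WithLp.equiv 2 _).symm (y₁, x₁) + (1 - t) • (WithLp.equiv 2 _).symm (y₂, x₂)) := by
    have : t • (WithLp.equiv 2 _).symm (y₁, x₁) + (1 - t) • (WithLp.equiv 2 _).symm (y₂, x₂)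
        = (WithLp.equiv 2 _).symm (t • y₁ + (1 - t) • y₂, t • x₁ + (1 - t) • x₂) := rfl
    rw [this]
    exact hφtlb ⟨_, hmemS, rfl⟩
  have hnorm : ‖x₂ - x₁‖ ^ 2 ≤
      ‖(WithLp.equiv 2 _).symm (y₂, x₂) - (WithLp.equiv 2 _).symm (y₁, x₁)‖ ^ 2 := by
    rw [WithLp.prod_norm_sq_eq_of_L2]
    have : ((WithLp.equiv 2 _).symm (y₂, x₂) - (WithLp.equiv 2 _).symm (y₁, x₁) :
        WithLp 2 (EuclideanSpace ℝ (Fin nF) × EuclideanSpace ℝ (Fin mE))).snd = x₂ - x₁ := rfl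
    rw [this]
    nlinarith [sq_nonneg ‖((WithLp.equiv 2 _).symm (y₂, x₂) - (WithLp.equiv 2 _).symm (y₁, x₁) :
        WithLp 2 (EuclideanSpace ℝ (Fin nF) × EuclideanSpace ℝ (Fin mE))).fst‖]
  have ht01 : 0 ≤ t * (1 - t) := mul_nonneg ht0 (by linarith)
  calc φ (t • x₁ + (1 - t) • x₂) ≤ _ := hval
    _ ≤ t * h ((WithLp.equiv 2 _).symm (y₁, x₁)) + (1 - t) * h ((WithLp.equiv 2 _).symm (y₂, x₂))
        - a / 2 * (t * (1 - t)) * ‖(WithLp.equiv 2 _).symm (y₂, x₂) - (WithLp.equiv 2 _).symm (y₁, x₁)‖ ^ 2 := key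
    _ ≤ t * φ x₁ + (1 - t) * φ x₂ - a / 2 * (t * (1 - t)) * ‖x₂ - x₁‖ ^ 2 := by
        have h1 : φ x₁ = h ((WithLp.equiv 2 _).symm (y₁, x₁)) := hy₁.symm
        have h2 : φ x₂ = h ((WithLp.equiv 2 _).symm (y₂, x₂)) := hy₂.symm
        rw [h1, h2]
        have : a / 2 * (t * (1 - t)) * ‖x₂ - x₁‖ ^ 2 ≤ a / 2 * (t * (1 - t)) *
            ‖(WithLp.equiv 2 _).symm (y₂, x₂) - (WithLp.equiv 2 _).symm (y₁, x₁)‖ ^ 2 := by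
          apply mul_le_mul_of_nonneg_left hnorm
          positivity
        linarith
end
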